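/- Let $k$ be a field of characteristic $2$ and let $E$ be the Weierstrass curve $y^2 + y = x^3$ over $k$. An affine point $P = (x, y)$ of $E$ satisfies $3 \cdot P = 0$ in the group of points of $E$ if and only if $x^4 = x$ and $y^4 = y$. (Thus the $3$-torsion points of $E$ are exactly the point at infinity together with the points whose coordinates lie in $\mathbf{F}_4$.) -/

import Mathlib

/-!
Adding a point `P = (x, y)` of a Weierstrass curve to itself and comparing with `-P` shows that
`3 • P = 0` exactly when the tangent line at `P` meets the curve a third time at `P` again, i.e.
when the `x`-coordinate of `2 • P` equals `x`. On `y² + y = x³` in characteristic `2` the tangent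
at `(x, y)` has slope `x²` and `2 • P` has `x`-coordinate `x⁴`, so `3 • P = 0 ↔ x⁴ = x`. The
condition on `y` then comes for free: `y ↦ y² + y` commutes with the Frobenius, hence
`y⁴ + y = (y² + y)² + (y² + y) = x⁶ + x³ = x² (x⁴ + x)`.
-/

/-- The supersingular Weierstrass curve `y² + y = x³` in characteristic `2`. -/
def E2 (k : Type*) [CommRing k] : WeierstrassCurve.Affine k :=
  { a₁ := 0, a₂ := 0, a₃ := 1, a₄ := 0, a₆ := 0 }

open WeierstrassCurve.Affine

namespace WeierstrassCurve.Affine.Point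

variable {F : Type*} [Field F] [DecidableEq F] {W : WeierstrassCurve.Affine F}

lemma three_nsmul_some_eq_zero_iff {x y : F} (h : W.Nonsingular x y) (hy : y ≠ W.negY x y) :
    3 • some x y h = 0 ↔ W.addX x x (W.slope x x y y) = x := by
  rw [succ_nsmul, two_nsmul, add_eq_zero_iff_eq_neg, add_self_of_Y_ne' hy, neg_inj, some.injEq,
    negAddY, and_iff_left_iff_imp]
  intro hx
  rw [hx, sub_self, mul_zero, zero_add]

end WeierstrassCurve.Affine.Point

lemma E2_equation_iff {k : Type*} [CommRing k] (x y : k) :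
    (E2 k).Equation x y ↔ y ^ 2 + y = x ^ 3 := by
  rw [equation_iff]
  simp only [E2]
  constructor <;> intro h <;> linear_combination h

section CharTwo

variable {R : Type*} [CommRing R] [CharP R 2]

lemma E2_negY (x y : R) : (E2 R).negY x y = y + 1 := by
  simp only [negY, E2]
  linear_combination (-y - 1) * CharTwo.two_eq_zero (R := R)

lemma E2_addX_self (x : R) : (E2 R).addX x x (x ^ 2) = x ^ 4 := by
  simp only [addX, E2]
  linear_combination -x * CharTwo.two_eq_zero (R := R)

lemma E2_Y_pow_four_add_Y {x y : R} (h : (E2 R).Equation x y) :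
    y ^ 4 + y = x ^ 2 * (x ^ 4 + x) := by
  rw [E2_equation_iff] at h
  linear_combination (y ^ 2 + y + x ^ 3 + 1) * h - (y ^ 3 + y ^ 2) * CharTwo.two_eq_zero (R := R)

lemma E2_Y_ne_negY [Nontrivial R] (x y : R) : y ≠ (E2 R).negY x y := by
  rw [E2_negY]
  exact (succ_ne_self y).symm

variable {k : Type*} [Field k] [CharP k 2]

lemma E2_slope_self [DecidableEq k] (x y : k) : (E2 k).slope x x y y = x ^ 2 := by
  rw [slope_of_Y_ne rfl (E2_Y_ne_negY x y), E2_negY]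
  simp only [E2]
  rw [sub_add_cancel_left, div_neg, div_one, neg_eq_iff_eq_neg]
  linear_combination (2 * x ^ 2) * CharTwo.two_eq_zero (R := k)

end CharTwo

open Classical in
/-- On the curve `y² + y = x³` over a field of characteristic `2`, an affine point `(x, y)` is
a 3-torsion point if and only if `x⁴ = x` and `y⁴ = y`, i.e. if and only if its coordinates
lie in `𝔽₄`. -/
theorem three_torsion_iff (k : Type*) [Field k] [CharP k 2] (x y : k)
    (h : (E2 k).Nonsingular x y) :
    (3 : ℕ) • Point.some x y h = 0 ↔ x ^ 4 = x ∧ y ^ 4 = y := by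
  rw [Point.three_nsmul_some_eq_zero_iff h (E2_Y_ne_negY x y), E2_slope_self, E2_addX_self]
  refine ⟨fun hx => ⟨hx, ?_⟩, And.left⟩
  have hy := E2_Y_pow_four_add_Y h.1
  rwa [hx, CharTwo.add_self_eq_zero, mul_zero, CharTwo.add_eq_zero] at hy
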